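/- The dual-norm distance from t̄ to the polytope C admits the minimax representation λ# = min_{t ∈ C} N#(t̄ − t) = max{ min_{1 ≤ j ≤ n} ⟨Δ, t̄ − t_j⟩ : Δ ∈ ℝ^k, N(Δ) ≤ 1 }, where both the minimum over C and the maximum over the closed unit ball of N are attained. -/

import Mathlib

open scoped RealInnerProductSpace

/-- The dual norm `N#(v) = sup { ⟪Δ, v⟫ : N(Δ) ≤ 1 }` of a norm `N` on `ℝ^k`. -/
noncomputable def dualNorm {k : ℕ} (N : EuclideanSpace ℝ (Fin k) → ℝ)
    (v : EuclideanSpace ℝ (Fin k)) : ℝ :=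
  sSup ((fun Δ : EuclideanSpace ℝ (Fin k) => ⟪Δ, v⟫) '' {Δ | N Δ ≤ 1})

/-!
Weak duality: if `N Δ ≤ 1`, the minimum of the affine function `⟪Δ, t̄ - ·⟫` over the vertices
`t j` is its minimum over `C`, so it is at most `⟪Δ, t̄ - s₀⟫ ≤ N#(t̄ - s₀)` for every `s₀ ∈ C`.

Strong duality: let `s₀` minimise the continuous function `N#(t̄ - ·)` on the compact set `C`,
with value `λ`. The open `N#`-ball of radius `λ` around `t̄` is disjoint from `C`, and a
hyperplane separating the two, normalised so that its normal `Δ` has `N Δ = 1`, satisfies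
`⟪Δ, t̄ - s⟫ ≥ λ` on `C`. The last step uses that `N` is in turn the dual norm of `N#`, i.e. that
every `Δ` has a norming vector `v` with `N#(v) ≤ 1` and `⟪Δ, v⟫ = N Δ` (Hahn–Banach).
-/

namespace Seminorm

variable {E : Type*}

theorem exists_linearMap_le_eq [AddCommGroup E] [Module ℝ E] (p : Seminorm ℝ E) (w : E) :
    ∃ g : E →ₗ[ℝ] ℝ, (∀ x, g x ≤ p x) ∧ g w = p w := by
  rcases eq_or_ne w 0 with rfl | hw
  · exact ⟨0, fun x => apply_nonneg p x, by simp⟩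
  obtain ⟨g, hgw, hgp⟩ := exists_extension_of_le_sublinear
    (LinearPMap.mkSpanSingleton w (p w) hw) p
    (fun c hc x => by rw [map_smul_eq_mul, Real.norm_of_nonneg hc.le])
    (map_add_le_add p) (by
      rintro ⟨x, hx⟩
      obtain ⟨a, rfl⟩ := Submodule.mem_span_singleton.1 hx
      rw [LinearPMap.mkSpanSingleton'_apply, map_smul_eq_mul, smul_eq_mul, Real.norm_eq_abs]
      exact mul_le_mul_of_nonneg_right (le_abs_self a) (apply_nonneg p w))
  exact ⟨g, hgp, (hgw ⟨w, Submodule.mem_span_singleton_self w⟩).trans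
    (LinearPMap.mkSpanSingleton_apply ℝ ℝ hw _)⟩

variable [NormedAddCommGroup E] [NormedSpace ℝ E] [FiniteDimensional ℝ E]

protected theorem continuous_of_finiteDimensional (p : Seminorm ℝ E) : Continuous p :=
  p.convexOn.locallyLipschitz.continuous

theorem exists_pos_mul_norm_le (p : Seminorm ℝ E) (hp : ∀ x, p x = 0 → x = 0) :
    ∃ c > 0, ∀ x, c * ‖x‖ ≤ p x := by
  cases subsingleton_or_nontrivial E
  · exact ⟨1, one_pos, fun x => by simp [Subsingleton.elim x 0]⟩
  obtain ⟨x₀, hx₀, hmin⟩ := (isCompact_sphere (0 : E) 1).exists_isMinOn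
    (NormedSpace.sphere_nonempty.2 zero_le_one) p.continuous_of_finiteDimensional.continuousOn
  have hx₀_ne : x₀ ≠ 0 := ne_zero_of_mem_unit_sphere ⟨x₀, hx₀⟩
  refine ⟨p x₀, (apply_nonneg p x₀).lt_of_ne' (mt (hp x₀) hx₀_ne), fun x => ?_⟩
  rcases eq_or_ne x 0 with rfl | hx
  · simp
  have hx' : 0 < ‖x‖ := norm_pos_iff.2 hx
  have hmem : ‖x‖⁻¹ • x ∈ Metric.sphere (0 : E) 1 := by simp [norm_smul, hx'.ne']
  have h := isMinOn_iff.1 hmin _ hmem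
  rw [map_smul_eq_mul, norm_inv, norm_norm] at h
  rwa [← le_inv_mul_iff₀' hx']

end Seminorm

section InnerProductSpace

variable {E : Type*} [NormedAddCommGroup E] [InnerProductSpace ℝ E]

theorem inf'_inner_sub_le_of_mem_convexHull {ι : Type*} [Fintype ι]
    (hι : (Finset.univ : Finset ι).Nonempty) (t : ι → E) (x Δ : E) {s : E}
    (hs : s ∈ convexHull ℝ (Set.range t)) :
    Finset.univ.inf' hι (fun j => ⟪Δ, x - t j⟫) ≤ ⟪Δ, x - s⟫ := by
  have hconcave : ConcaveOn ℝ Set.univ (fun y => ⟪Δ, x - y⟫) := by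
    refine (((-innerₛₗ ℝ Δ).concaveOn convex_univ).add_const ⟪Δ, x⟫).congr fun y _ => ?_
    simp [inner_sub_right, neg_add_eq_sub]
  obtain ⟨_, ⟨j, rfl⟩, hj⟩ := hconcave.exists_le_of_mem_convexHull (Set.subset_univ _) hs
  exact (Finset.inf'_le _ (Finset.mem_univ j)).trans hj

theorem exists_inner_lt_inner_sub_of_le_seminorm [CompleteSpace E] {q : Seminorm ℝ E}
    (hq : Continuous q) {C : Set E} (hC : Convex ℝ C) {x : E} {r : ℝ}
    (h : ∀ s ∈ C, r ≤ q (x - s)) :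
    ∃ d : E, ∀ z, q z < r → ∀ s ∈ C, ⟪d, z⟫ < ⟪d, x - s⟫ := by
  have hdisj : Disjoint (q.ball x r) C := Set.disjoint_left.2 fun s hs hsC => by
    rw [Seminorm.mem_ball, ← map_neg_eq_map, neg_sub] at hs
    exact (h s hsC).not_gt hs
  have hopen : IsOpen (q.ball x r) :=
    isOpen_lt (hq.comp (continuous_id.sub continuous_const)) continuous_const
  obtain ⟨f, u, hf_ball, hf_C⟩ := geometric_hahn_banach_open (q.convex_ball x r) hopen hC hdisj
  refine ⟨-(InnerProductSpace.toDual ℝ E).symm f, fun z hz s hs => ?_⟩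
  have hxz : x - z ∈ q.ball x r := by
    rwa [Seminorm.mem_ball, sub_sub_cancel_left, map_neg_eq_map]
  have h₁ := hf_ball _ hxz
  have h₂ := hf_C s hs
  simp only [inner_neg_left, inner_sub_right, InnerProductSpace.toDual_symm_apply, map_sub]
    at h₁ ⊢
  linarith

end InnerProductSpace

section DualNorm

variable {k : ℕ} {p : Seminorm ℝ (EuclideanSpace ℝ (Fin k))}

theorem bddAbove_inner_image (hp : ∀ x, p x = 0 → x = 0) (v : EuclideanSpace ℝ (Fin k)) :
    BddAbove ((fun Δ : EuclideanSpace ℝ (Fin k) => ⟪Δ, v⟫) '' {Δ | p Δ ≤ 1}) := by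
  obtain ⟨c, hc, hpc⟩ := p.exists_pos_mul_norm_le hp
  refine ⟨c⁻¹ * ‖v‖, ?_⟩
  rintro _ ⟨Δ, hΔ, rfl⟩
  have hΔc : ‖Δ‖ ≤ c⁻¹ := by simpa using (le_inv_mul_iff₀ hc).2 ((hpc Δ).trans hΔ)
  calc ⟪Δ, v⟫ ≤ ‖Δ‖ * ‖v‖ := real_inner_le_norm Δ v
    _ ≤ c⁻¹ * ‖v‖ := by gcongr

theorem inner_le_dualNorm (hp : ∀ x, p x = 0 → x = 0) {Δ : EuclideanSpace ℝ (Fin k)}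
    (hΔ : p Δ ≤ 1) (v : EuclideanSpace ℝ (Fin k)) : ⟪Δ, v⟫ ≤ dualNorm p v :=
  le_csSup (bddAbove_inner_image hp v) ⟨Δ, hΔ, rfl⟩

theorem abs_inner_le_dualNorm (hp : ∀ x, p x = 0 → x = 0) {Δ : EuclideanSpace ℝ (Fin k)}
    (hΔ : p Δ ≤ 1) (v : EuclideanSpace ℝ (Fin k)) : |⟪Δ, v⟫| ≤ dualNorm p v := by
  refine abs_le.2 ⟨?_, inner_le_dualNorm hp hΔ v⟩
  have h := inner_le_dualNorm hp (Δ := -Δ) (by rwa [map_neg_eq_map]) v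
  rw [inner_neg_left] at h
  linarith

theorem dualNorm_le {v : EuclideanSpace ℝ (Fin k)} {b : ℝ}
    (h : ∀ Δ, p Δ ≤ 1 → ⟪Δ, v⟫ ≤ b) : dualNorm p v ≤ b :=
  csSup_le ⟨_, ⟨0, by simp, rfl⟩⟩ (by rintro _ ⟨Δ, hΔ, rfl⟩; exact h Δ hΔ)

theorem dualNorm_zero (hp : ∀ x, p x = 0 → x = 0) : dualNorm p 0 = 0 :=
  le_antisymm (dualNorm_le fun _ _ => by simp)
    (by simpa using inner_le_dualNorm hp (by simp : p 0 ≤ 1) 0)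

noncomputable def dualSeminorm (hp : ∀ x, p x = 0 → x = 0) :
    Seminorm ℝ (EuclideanSpace ℝ (Fin k)) :=
  Seminorm.ofSMulLE (dualNorm p) (dualNorm_zero hp)
    (fun u v => dualNorm_le fun Δ hΔ => by
      rw [inner_add_right]
      exact add_le_add (inner_le_dualNorm hp hΔ u) (inner_le_dualNorm hp hΔ v))
    (fun r v => dualNorm_le fun Δ hΔ => by
      rw [real_inner_smul_right, Real.norm_eq_abs]
      calc r * ⟪Δ, v⟫ ≤ |r| * |⟪Δ, v⟫| := by rw [← abs_mul]; exact le_abs_self _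
        _ ≤ |r| * dualNorm p v := by gcongr; exact abs_inner_le_dualNorm hp hΔ v)

theorem coe_dualSeminorm (hp : ∀ x, p x = 0 → x = 0) : ⇑(dualSeminorm hp) = dualNorm p := rfl

theorem continuous_dualNorm (hp : ∀ x, p x = 0 → x = 0) : Continuous (dualNorm p) :=
  (dualSeminorm hp).continuous_of_finiteDimensional

theorem exists_dualNorm_le_one_inner_eq (w : EuclideanSpace ℝ (Fin k)) :
    ∃ v, dualNorm p v ≤ 1 ∧ ⟪w, v⟫ = p w := by
  obtain ⟨g, hgp, hgw⟩ := p.exists_linearMap_le_eq w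
  set v := (InnerProductSpace.toDual ℝ _).symm (LinearMap.toContinuousLinearMap g)
  have hv (y : EuclideanSpace ℝ (Fin k)) : ⟪y, v⟫ = g y := by
    rw [real_inner_comm]
    exact InnerProductSpace.toDual_symm_apply
  exact ⟨v, dualNorm_le fun Δ hΔ => (hv Δ).trans_le ((hgp Δ).trans hΔ), (hv w).trans hgw⟩

theorem le_of_forall_dualNorm_lt_inner_lt (hp : ∀ x, p x = 0 → x = 0)
    {Δ : EuclideanSpace ℝ (Fin k)} (hΔ : p Δ = 1) {r b : ℝ} (hr : 0 < r)
    (h : ∀ z, dualNorm p z < r → ⟪Δ, z⟫ < b) : r ≤ b := by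
  obtain ⟨v, hv, hΔv⟩ := exists_dualNorm_le_one_inner_eq (p := p) Δ
  have hb : 0 < b := by simpa using h 0 (by rwa [dualNorm_zero hp])
  by_contra! hbr
  have hz : dualNorm p (b • v) < r := calc
    dualNorm p (b • v) = b * dualNorm p v := by
      rw [← coe_dualSeminorm hp, map_smul_eq_mul, Real.norm_of_nonneg hb.le]
    _ ≤ b := mul_le_of_le_one_right hb.le hv
    _ < r := hbr
  have h_bv := h _ hz
  rw [real_inner_smul_right, hΔv, hΔ, mul_one] at h_bv
  exact h_bv.false

theorem exists_le_inner_sub_of_le_dualNorm_sub (hp : ∀ x, p x = 0 → x = 0)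
    {C : Set (EuclideanSpace ℝ (Fin k))} (hC : Convex ℝ C) {x : EuclideanSpace ℝ (Fin k)}
    {r : ℝ} (h : ∀ s ∈ C, r ≤ dualNorm p (x - s)) :
    ∃ Δ, p Δ ≤ 1 ∧ ∀ s ∈ C, r ≤ ⟪Δ, x - s⟫ := by
  rcases le_or_gt r 0 with hr | hr
  · exact ⟨0, by simp, fun s _ => by simpa using hr⟩
  obtain ⟨d, hd⟩ := exists_inner_lt_inner_sub_of_le_seminorm (q := dualSeminorm hp)
    (continuous_dualNorm hp) hC h
  rcases eq_or_ne d 0 with rfl | hd0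
  -- `d = 0` is only possible when `C` is empty
  · refine ⟨0, by simp, fun s hs => ?_⟩
    simpa using hd 0 (by rwa [map_zero]) s hs
  have hpd : 0 < p d := (apply_nonneg p d).lt_of_ne' (mt (hp d) hd0)
  have hp_one : p ((p d)⁻¹ • d) = 1 := by
    rw [map_smul_eq_mul, norm_inv, Real.norm_of_nonneg hpd.le, inv_mul_cancel₀ hpd.ne']
  refine ⟨_, hp_one.le, fun s hs =>
    le_of_forall_dualNorm_lt_inner_lt hp hp_one hr fun z hz => ?_⟩
  rw [real_inner_smul_left, real_inner_smul_left]
  exact mul_lt_mul_of_pos_left (hd z hz s hs) (inv_pos.2 hpd)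

end DualNorm

theorem dual_dist_minimax_general {k n : ℕ} (hn : 1 ≤ n)
    (tbar : EuclideanSpace ℝ (Fin k)) (t : Fin n → EuclideanSpace ℝ (Fin k))
    (N : EuclideanSpace ℝ (Fin k) → ℝ)
    (hN_add : ∀ x y, N (x + y) ≤ N x + N y)
    (hN_smul : ∀ (c : ℝ) (x), N (c • x) = |c| * N x)
    (hN_zero : ∀ x, N x = 0 ↔ x = 0) :
    ∃ lam : ℝ,
      IsLeast ((fun s => dualNorm N (tbar - s)) '' convexHull ℝ (Set.range t)) lam ∧
      IsGreatest
        ((fun Δ : EuclideanSpace ℝ (Fin k) =>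
            Finset.univ.inf' (Finset.univ_nonempty_iff.mpr (Fin.pos_iff_nonempty.mp hn))
              (fun j => ⟪Δ, tbar - t j⟫)) '' {Δ | N Δ ≤ 1})
        lam := by
  obtain ⟨p, rfl⟩ : ∃ p : Seminorm ℝ (EuclideanSpace ℝ (Fin k)), ⇑p = N :=
    ⟨Seminorm.of N hN_add fun c x => by rw [hN_smul, Real.norm_eq_abs], rfl⟩
  have hp (x) : p x = 0 → x = 0 := (hN_zero x).1
  have hC_ne : (convexHull ℝ (Set.range t)).Nonempty :=
    ⟨t ⟨0, hn⟩, subset_convexHull ℝ _ ⟨_, rfl⟩⟩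
  have hcont : Continuous fun s => dualNorm p (tbar - s) :=
    (continuous_dualNorm hp).comp (continuous_const.sub continuous_id)
  obtain ⟨s₀, hs₀, hmin⟩ := ((Set.finite_range t).isCompact_convexHull (𝕜 := ℝ)).exists_isMinOn
    hC_ne hcont.continuousOn
  obtain ⟨Δ₀, hΔ₀, hΔ₀_le⟩ :=
    exists_le_inner_sub_of_le_dualNorm_sub hp (convex_convexHull ℝ _) fun s hs => hmin hs
  have hweak (Δ) (hΔ : p Δ ≤ 1) := (inf'_inner_sub_le_of_mem_convexHull
    (Finset.univ_nonempty_iff.mpr (Fin.pos_iff_nonempty.mp hn)) t tbar Δ hs₀).trans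
    (inner_le_dualNorm hp hΔ (tbar - s₀))
  refine ⟨dualNorm p (tbar - s₀), ⟨⟨s₀, hs₀, rfl⟩, ?_⟩, ⟨⟨Δ₀, hΔ₀, ?_⟩, ?_⟩⟩
  · rintro _ ⟨s, hs, rfl⟩
    exact hmin hs
  · exact le_antisymm (hweak Δ₀ hΔ₀)
      (Finset.le_inf' _ _ fun j _ => hΔ₀_le _ (subset_convexHull ℝ _ ⟨j, rfl⟩))
  · rintro _ ⟨Δ, hΔ, rfl⟩
    exact hweak Δ hΔ

/-- Minimax representation of the dual-norm distance from `t̄` to the polytope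
`C = conv{t_1, …, t_n}`:
`λ# = min_{t ∈ C} N#(t̄ - t) = max { min_j ⟪Δ, t̄ - t_j⟫ : N(Δ) ≤ 1 }`,
with both the minimum and the maximum attained. -/
theorem dual_dist_minimax {k n : ℕ} (hk : 1 ≤ k) (hn : 1 ≤ n)
    (tbar : EuclideanSpace ℝ (Fin k)) (t : Fin n → EuclideanSpace ℝ (Fin k))
    (N : EuclideanSpace ℝ (Fin k) → ℝ)
    (hN_add : ∀ x y, N (x + y) ≤ N x + N y)
    (hN_smul : ∀ (c : ℝ) (x), N (c • x) = |c| * N x)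
    (hN_zero : ∀ x, N x = 0 ↔ x = 0) :
    ∃ lam : ℝ,
      IsLeast ((fun s => dualNorm N (tbar - s)) '' convexHull ℝ (Set.range t)) lam ∧
      IsGreatest
        ((fun Δ : EuclideanSpace ℝ (Fin k) =>
            Finset.univ.inf' (Finset.univ_nonempty_iff.mpr (Fin.pos_iff_nonempty.mp hn))
              (fun j => ⟪Δ, tbar - t j⟫)) '' {Δ | N Δ ≤ 1})
        lam :=
  dual_dist_minimax_general hn tbar t N hN_add hN_smul hN_zero
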